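/- Let Ψ⁰ = λ + Σ_{n≥1} Ψ⁰ₙ λ⁻ⁿ, Ψ¹ = -zλ + x + Σ_{n≥1} Ψ¹ₙ λ⁻ⁿ, Ψ² = wλ + y + Σ_{n≥1} Ψ²ₙ λ⁻ⁿ be formal series whose coefficients are smooth functions of (x,y,z,w). If the determinant of the Jacobian J = ∂(Ψ⁰,Ψ¹,Ψ²)/∂(λ,x,y) equals 1 identically (as a formal Laurent series in λ), then the coefficient of λ⁻¹ in det J gives Ψ¹_{1,x} + zΨ⁰_{1,x} + Ψ²_{1,y} - wΨ⁰_{1,y} = 0. -/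

import Mathlib

/-- Partial derivative in the `i`-th coordinate direction on ℝ⁴,
coordinates `(x,y,z,w) = (0,1,2,3)`. -/
noncomputable def pd (i : Fin 4) (f : (Fin 4 → ℝ) → ℝ) (p : Fin 4 → ℝ) : ℝ :=
  fderiv ℝ f p (Pi.single i 1)

/-- The leading (`λ`-linear) coefficients of `Ψ⁰ = λ + …`, `Ψ¹ = -zλ + x + …`,
`Ψ² = wλ + y + …` at the point `p`. -/
def lead (p : Fin 4 → ℝ) : Fin 3 → ℝ := ![1, -p 2, p 3]

/-- The Jacobian `J = ∂(Ψ⁰,Ψ¹,Ψ²)/∂(λ,x,y)` at the point `p`, as a matrix of formal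
power series in `μ = λ⁻¹` (all its entries contain no positive powers of `λ`).
Row 0 is the `∂_λ` row (note `∂_λ λ⁻ⁿ = -n λ⁻ⁿ⁻¹`), rows 1 and 2 are the `∂_x`, `∂_y`
rows; `c b n` is the coefficient `Ψᵇₙ` of `λ⁻ⁿ` (`n ≥ 1`), a function of `(x,y,z,w)`. -/
noncomputable def Jmat (c : Fin 3 → ℕ → (Fin 4 → ℝ) → ℝ) (p : Fin 4 → ℝ) :
    Matrix (Fin 3) (Fin 3) (PowerSeries ℝ) :=
  Matrix.of
    ![fun b => PowerSeries.mk fun m =>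
        if m = 0 then lead p b else -((m : ℝ) - 1) * c b (m - 1) p,
      fun b => PowerSeries.mk fun m =>
        if m = 0 then (if b = 1 then 1 else 0) else pd 0 (c b m) p,
      fun b => PowerSeries.mk fun m =>
        if m = 0 then (if b = 2 then 1 else 0) else pd 1 (c b m) p]

/-- If `det J = 1` identically as a formal (Laurent) series in `λ`, then the coefficient
of `λ⁻¹` in `det J` yields `Ψ¹₁ₓ + zΨ⁰₁ₓ + Ψ²₁ᵧ - wΨ⁰₁ᵧ = 0`. -/
theorem stmt_10 (c : Fin 3 → ℕ → (Fin 4 → ℝ) → ℝ)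
    (hc : ∀ b n, ContDiff ℝ (⊤ : ℕ∞) (c b n))
    (hdet : ∀ p : Fin 4 → ℝ, (Jmat c p).det = 1) :
    ∀ p : Fin 4 → ℝ,
      pd 0 (c 1 1) p + p 2 * pd 0 (c 0 1) p + pd 1 (c 2 1) p - p 3 * pd 1 (c 0 1) p = 0 := by
  intro p
  have h := congrArg (PowerSeries.coeff (R := ℝ) 1) (hdet p)
  have ha : (Finset.HasAntidiagonal.antidiagonal 1 : Finset (ℕ×ℕ)) = {(0,1),(1,0)} := by decide
  simp [Jmat, Matrix.det_fin_three, PowerSeries.coeff_mul, ha, lead, Finset.sum_insert,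
    Finset.sum_singleton] at h
  linarith
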